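/- arXiv:2010.05853 — 6 statements merged into one kernel-verified Lean document; each statement's English description precedes it below -/
import Mathlib

section
/- (Naimark dilation, used to prove that projective measurements suffice in any contextuality scenario with only trivial measurement equivalences.) Let d, K ≥ 1 and let {M_k}_{k ∈ Fin K} be a POVM on ℂ^d, i.e. each M_k is a positive semidefinite d×d complex matrix and Σ_k M_k = I_d. Then there exists a unitary matrix U on ℂ^K ⊗ ℂ^d (i.e. a unitary (K·d)×(K·d) complex matrix, with the tensor product realised as the Kronecker product) such that, setting Π_k = U (E_{kk} ⊗ I_d) U†, where E_{kk} is the K×K matrix with a single 1 in entry (k,k): each Π_k is Hermitian and idempotent, Σ_k Π_k = I_{Kd}, Π_k Π_l = 0 for k ≠ l, and for every d×d complex matrix ρ, tr((E_{00} ⊗ ρ) Π_k) = tr(ρ M_k) for all k ∈ Fin K. -/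
/-!
Write `M k = (S k)ᴴ * S k`. Stacking the blocks `S k` gives `V = ∑ₖ eₖ ⊗ S k : ℂ^d → ℂ^K ⊗ ℂ^d`,
an isometry because `Vᴴ V = ∑ₖ M k = 1`. Completing its columns to an orthonormal basis gives a
unitary `W` with `W (e₀ ⊗ x) = V x`. Conjugating the projective measurement `E_kk ⊗ 1` by `W`
yields the projective measurement `Π k = Wᴴ (E_kk ⊗ 1) W`, whose `(0, 0)` block is
`Vᴴ (E_kk ⊗ 1) V = (S k)ᴴ * S k = M k`; the trace identity only sees this block.
-/

open Matrix ComplexOrder Kronecker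

structure IsProjectiveMeasurement {ι R : Type*} [Fintype ι] [Semiring R] [Star R]
    (P : ι → R) : Prop where
  isSelfAdjoint : ∀ k, IsSelfAdjoint (P k)
  mul_self : ∀ k, P k * P k = P k
  mul_eq_zero_of_ne : ∀ k l, k ≠ l → P k * P l = 0
  sum_eq_one : ∑ k, P k = 1

theorem IsProjectiveMeasurement.conj_unitary {ι R : Type*} [Fintype ι] [Semiring R] [StarRing R]
    {P : ι → R} (hP : IsProjectiveMeasurement P) {u : R} (hu : u ∈ unitary R) :
    IsProjectiveMeasurement fun k ↦ u * P k * star u := by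
  have conj_mul_conj (a b : R) : u * a * star u * (u * b * star u) = u * (a * b) * star u := by
    simp only [mul_assoc, ← mul_assoc (star u) u, Unitary.star_mul_self_of_mem hu, one_mul]
  refine ⟨fun k ↦ (hP.isSelfAdjoint k).conjugate u, fun k ↦ ?_, fun k l hkl ↦ ?_, ?_⟩
  · rw [conj_mul_conj, hP.mul_self]
  · rw [conj_mul_conj, hP.mul_eq_zero_of_ne k l hkl, mul_zero, zero_mul]
  · rw [← Finset.sum_mul, ← Finset.mul_sum, hP.sum_eq_one, mul_one,
      Unitary.mul_star_self_of_mem hu]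

namespace Matrix

variable {ι l m n p α 𝕜 : Type*} [RCLike 𝕜]

open scoped MatrixOrder in
theorem PosSemidef.exists_eq_conjTranspose_mul_self [Fintype n] [DecidableEq n]
    {A : Matrix n n 𝕜} (hA : A.PosSemidef) : ∃ B : Matrix n n 𝕜, A = Bᴴ * B :=
  CStarAlgebra.nonneg_iff_eq_star_mul_self.mp hA.nonneg

theorem sum_kronecker [NonUnitalNonAssocSemiring α] (s : Finset ι) (A : ι → Matrix l m α)
    (B : Matrix n p α) : ∑ k ∈ s, A k ⊗ₖ B = (∑ k ∈ s, A k) ⊗ₖ B := by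
  ext
  simp [sum_apply, Finset.sum_mul]

theorem isProjectiveMeasurement_single_kronecker_one [Fintype ι] [DecidableEq ι] [Fintype n]
    [DecidableEq n] [CommSemiring α] [StarRing α] :
    IsProjectiveMeasurement fun k : ι ↦ single k k (1 : α) ⊗ₖ (1 : Matrix n n α) := by
  refine ⟨fun k ↦ ?_, fun k ↦ ?_, fun k l hkl ↦ ?_, ?_⟩
  · simp [IsSelfAdjoint, star_eq_conjTranspose, conjTranspose_kronecker, conjTranspose_single]
  · rw [← mul_kronecker_mul, single_mul_single_same, mul_one, mul_one]
  · rw [← mul_kronecker_mul, single_mul_single_of_ne (h := hkl), zero_kronecker]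
  · rw [sum_kronecker, sum_single_one, one_kronecker_one]

theorem trace_single_kronecker_mul [Fintype ι] [DecidableEq ι] [Fintype n] [CommSemiring α]
    (i : ι) (ρ : Matrix n n α) (A : Matrix (ι × n) (ι × n) α) :
    ((single i i 1 ⊗ₖ ρ) * A).trace = (ρ * A.submatrix (Prod.mk i) (Prod.mk i)).trace := by
  simp [trace, mul_apply, Fintype.sum_prod_type, single_apply, ite_and]

theorem submatrix_conjTranspose_mul_mul [Fintype m] [NonUnitalSemiring α] [StarRing α]
    (W A : Matrix m m α) (e : n → m) :
    (Wᴴ * A * W).submatrix e e = (W.submatrix id e)ᴴ * A * W.submatrix id e := by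
  rw [submatrix_mul _ _ _ id _ Function.bijective_id,
    submatrix_mul _ _ _ id _ Function.bijective_id, conjTranspose_submatrix, submatrix_id_id]

theorem exists_mem_unitaryGroup_submatrix_eq [Fintype m] [DecidableEq m] [Fintype n]
    [DecidableEq n] (V : Matrix m n 𝕜) (hV : Vᴴ * V = 1) {e : n → m}
    (he : Function.Injective e) :
    ∃ W ∈ unitaryGroup m 𝕜, W.submatrix id e = V := by
  set cols : n → EuclideanSpace 𝕜 m := fun j ↦ WithLp.toLp 2 (Vᵀ j)
  have hcols : Orthonormal 𝕜 cols := by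
    rw [← gram_eq_one_iff_orthonormal, gram_eq_conjTranspose_mul (EuclideanSpace.basisFun m 𝕜)]
    exact hV
  have hv : Orthonormal 𝕜 ((Set.range e).domRestrict (Function.extend e cols 0)) := by
    have : (Set.range e).domRestrict (Function.extend e cols 0) =
        cols ∘ (Equiv.ofInjective e he).symm := by
      ext ⟨_, j, rfl⟩ : 1
      simp [Set.domRestrict_apply, he.extend_apply]
    exact this ▸ hcols.comp _ (Equiv.injective _)
  obtain ⟨b, hb⟩ := hv.exists_orthonormalBasis_extension_of_card_eq (by simp)
  -- the columns of this change-of-basis matrix are the vectors of `b`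
  refine ⟨(EuclideanSpace.basisFun m 𝕜).toBasis.toMatrix b,
    (EuclideanSpace.basisFun m 𝕜).toMatrix_orthonormalBasis_mem_unitary b, ?_⟩
  ext i j
  simp [Module.Basis.toMatrix_apply, hb (e j) ⟨j, rfl⟩, he.extend_apply, cols]

def blockColumn (S : ι → Matrix m n α) : Matrix (ι × m) n α :=
  of fun q j ↦ S q.1 q.2 j

variable [Fintype ι] [DecidableEq ι] [Fintype m] [DecidableEq m] [CommSemiring α] [StarRing α]

theorem blockColumn_conjTranspose_mul_single_kronecker_one_mul (S : ι → Matrix m n α) (k : ι) :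
    (blockColumn S)ᴴ * (single k k 1 ⊗ₖ (1 : Matrix m m α)) * blockColumn S = (S k)ᴴ * S k := by
  ext i j
  simp [blockColumn, mul_apply, Fintype.sum_prod_type, single_apply, one_apply, ite_and]

theorem blockColumn_conjTranspose_mul_self [Fintype n] (S : ι → Matrix m n α) :
    (blockColumn S)ᴴ * blockColumn S = ∑ k, (S k)ᴴ * S k := by
  rw [← Matrix.mul_one (blockColumn S)ᴴ,
    ← (isProjectiveMeasurement_single_kronecker_one (n := m) (α := α)).sum_eq_one,
    Matrix.mul_sum, Matrix.sum_mul]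
  simp_rw [blockColumn_conjTranspose_mul_single_kronecker_one_mul]

end Matrix

theorem naimark_dilation_general (d K : ℕ) (hK : 1 ≤ K)
    (M : Fin K → Matrix (Fin d) (Fin d) ℂ)
    (hM : ∀ k, (M k).PosSemidef) (hMsum : ∑ k, M k = 1) :
    ∃ U : Matrix (Fin K × Fin d) (Fin K × Fin d) ℂ,
      U * Uᴴ = 1 ∧ Uᴴ * U = 1 ∧
      ∃ Pi : Fin K → Matrix (Fin K × Fin d) (Fin K × Fin d) ℂ,
        (∀ k, Pi k =
          U * (Matrix.single k k (1 : ℂ) ⊗ₖ (1 : Matrix (Fin d) (Fin d) ℂ)) * Uᴴ) ∧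
        (∀ k, (Pi k).IsHermitian) ∧
        (∀ k, Pi k * Pi k = Pi k) ∧
        (∑ k, Pi k = 1) ∧
        (∀ k l, k ≠ l → Pi k * Pi l = 0) ∧
        (∀ ρ : Matrix (Fin d) (Fin d) ℂ, ∀ k,
          ((Matrix.single (⟨0, hK⟩ : Fin K) (⟨0, hK⟩ : Fin K) (1 : ℂ) ⊗ₖ ρ) *
            Pi k).trace = (ρ * M k).trace) := by
  choose S hS using fun k ↦ (hM k).exists_eq_conjTranspose_mul_self
  have hV : (blockColumn S)ᴴ * blockColumn S = 1 := by
    rw [blockColumn_conjTranspose_mul_self, ← hMsum]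
    simp_rw [hS]
  obtain ⟨W, hW, hWV⟩ :=
    exists_mem_unitaryGroup_submatrix_eq _ hV (Prod.mk_right_injective ⟨0, hK⟩)
  have hU : Wᴴ ∈ unitary _ := Unitary.star_mem hW
  have hPi := isProjectiveMeasurement_single_kronecker_one.conj_unitary hU
  refine ⟨Wᴴ, Unitary.mul_star_self_of_mem hU, Unitary.star_mul_self_of_mem hU, _, fun k ↦ rfl,
    fun k ↦ isHermitian_iff_isSelfAdjoint.mpr (hPi.isSelfAdjoint k), hPi.mul_self, hPi.sum_eq_one,
    hPi.mul_eq_zero_of_ne, fun ρ k ↦ ?_⟩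
  rw [trace_single_kronecker_mul, conjTranspose_conjTranspose, submatrix_conjTranspose_mul_mul,
    hWV, blockColumn_conjTranspose_mul_single_kronecker_one_mul, hS]

/-- Naimark dilation: every `K`-outcome POVM `{M_k}` on `ℂ^d` is realised by a projective
measurement `Π_k = U (E_{kk} ⊗ I_d) U†` on `ℂ^K ⊗ ℂ^d` for some unitary `U`, in the sense
that `tr((E_{00} ⊗ ρ) Π_k) = tr(ρ M_k)` for every `d×d` matrix `ρ`. -/
theorem naimark_dilation (d K : ℕ) (hd : 1 ≤ d) (hK : 1 ≤ K)
    (M : Fin K → Matrix (Fin d) (Fin d) ℂ)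
    (hM : ∀ k, (M k).PosSemidef) (hMsum : ∑ k, M k = 1) :
    ∃ U : Matrix (Fin K × Fin d) (Fin K × Fin d) ℂ,
      U * Uᴴ = 1 ∧ Uᴴ * U = 1 ∧
      ∃ Pi : Fin K → Matrix (Fin K × Fin d) (Fin K × Fin d) ℂ,
        (∀ k, Pi k =
          U * (Matrix.single k k (1 : ℂ) ⊗ₖ (1 : Matrix (Fin d) (Fin d) ℂ)) * Uᴴ) ∧
        (∀ k, (Pi k).IsHermitian) ∧
        (∀ k, Pi k * Pi k = Pi k) ∧
        (∑ k, Pi k = 1) ∧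
        (∀ k l, k ≠ l → Pi k * Pi l = 0) ∧
        (∀ ρ : Matrix (Fin d) (Fin d) ℂ, ∀ k,
          ((Matrix.single (⟨0, hK⟩ : Fin K) (⟨0, hK⟩ : Fin K) (1 : ℂ) ⊗ₖ ρ) *
            Pi k).trace = (ρ * M k).trace) :=
  naimark_dilation_general d K hK M hM hMsum
end

section
/- (Classical realisation underlying the result that contextuality scenarios with only trivial preparation equivalences admit no contextuality.) Let X, Y, K ≥ 1 and let p : Fin X × Fin Y × Fin K → ℝ satisfy p(k|x,y) ≥ 0 for all k, x, y and Σ_{k ∈ Fin K} p(k|x,y) = 1 for all x, y. On ℂ^X define ρ_x = E_{xx} (the matrix unit with 1 at position (x,x)) and M^y_k = Σ_{x ∈ Fin X} p(k|x,y) E_{xx} (the diagonal matrix with entries p(k|x,y)). Then: (i) each ρ_x is a density matrix; (ii) for each y, {M^y_k}_k is a POVM, i.e. 0 ≤ M^y_k ≤ I and Σ_k M^y_k = I; (iii) tr(ρ_x M^y_k) = p(k|x,y) for all x, y, k; and (iv) for any coefficients β, β' : Fin K × Fin Y → ℝ, if Σ_{k,y} β(k,y) p(k|x,y) = Σ_{k,y}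 β'(k,y) p(k|x,y) holds for every x ∈ Fin X, then Σ_{k,y} β(k,y) M^y_k = Σ_{k,y} β'(k,y) M^y_k as matrices. -/
open Matrix ComplexOrder

/-!
Every operator of the realisation is diagonal: `ρ_x = diagonal (Pi.single x 1)` and
`M^y_k = diagonal (x ↦ p(k|x,y))`. Positivity, normalisation and the Born rule are then
entrywise statements about `p`, and a linear combination `Σ β(k,y) M^y_k` is the diagonal
matrix whose `x`-th entry is `Σ β(k,y) p(k|x,y)`, so equal behaviour sums give equal operators.
-/

section Diagonal

variable {n α : Type*} [DecidableEq n]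

lemma sum_smul_single_one_eq_diagonal [Fintype n] [NonAssocSemiring α] (c : n → α) :
    ∑ i, c i • single i i (1 : α) = diagonal c := by
  simp_rw [smul_single, smul_eq_mul, mul_one]
  exact sum_single_eq_diagonal c

lemma diagonal_finsetSum {ι : Type*} [AddCommMonoid α] (s : Finset ι) (d : ι → n → α) :
    diagonal (∑ i ∈ s, d i) = ∑ i ∈ s, diagonal (d i) :=
  map_sum (diagonalAddMonoidHom n α) d s

lemma trace_diagonal_single_mul_diagonal [Fintype n] [NonAssocSemiring α] (x : n) (c : n → α) :
    (diagonal (Pi.single x 1) * diagonal c).trace = c x := by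
  simp [diagonal_mul_diagonal, trace_diagonal, Pi.single_apply]

end Diagonal

lemma posSemidef_diagonal_ofReal {n : Type*} [Fintype n] [DecidableEq n] {d : n → ℝ}
    (hd : ∀ i, 0 ≤ d i) : (diagonal fun i => (d i : ℂ)).PosSemidef :=
  posSemidef_diagonal_iff.mpr fun i => Complex.zero_le_real.mpr (hd i)

theorem diagonal_realisation_trivial_preparation_equivalences_general
    (X Y K : ℕ)
    (p : Fin X × Fin Y × Fin K → ℝ)
    (hpos : ∀ x y k, 0 ≤ p (x, y, k))
    (hnorm : ∀ x y, ∑ k, p (x, y, k) = 1) :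
    (∀ x : Fin X, (Matrix.single x x (1 : ℂ)).PosSemidef ∧
      (Matrix.single x x (1 : ℂ)).trace = 1) ∧
    (∀ y k, (∑ x, (p (x, y, k) : ℂ) • Matrix.single x x (1 : ℂ)).PosSemidef) ∧
    (∀ y k, ((1 : Matrix (Fin X) (Fin X) ℂ) -
      ∑ x, (p (x, y, k) : ℂ) • Matrix.single x x (1 : ℂ)).PosSemidef) ∧
    (∀ y, ∑ k, ∑ x, (p (x, y, k) : ℂ) • Matrix.single x x (1 : ℂ) = 1) ∧
    (∀ x y k, (Matrix.single x x (1 : ℂ) *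
      ∑ x', (p (x', y, k) : ℂ) • Matrix.single x' x' (1 : ℂ)).trace = (p (x, y, k) : ℂ)) ∧
    (∀ β β' : Fin K × Fin Y → ℝ,
      (∀ x, ∑ k, ∑ y, β (k, y) * p (x, y, k) = ∑ k, ∑ y, β' (k, y) * p (x, y, k)) →
      ∑ k, ∑ y, (β (k, y) : ℂ) • ∑ x, (p (x, y, k) : ℂ) • Matrix.single x x (1 : ℂ)
        = ∑ k, ∑ y, (β' (k, y) : ℂ) • ∑ x, (p (x, y, k) : ℂ) • Matrix.single x x (1 : ℂ)) := by
  have hle : ∀ x y k, p (x, y, k) ≤ 1 := fun x y k =>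
    hnorm x y ▸ Finset.single_le_sum (fun k' _ => hpos x y k') (Finset.mem_univ k)
  have hcombination : ∀ q : Fin K × Fin Y → ℝ,
      ∑ k, ∑ y, (q (k, y) : ℂ) • diagonal (fun x => (p (x, y, k) : ℂ))
        = diagonal fun x => ((∑ k, ∑ y, q (k, y) * p (x, y, k) : ℝ) : ℂ) := by
    intro q
    simp_rw [← diagonal_smul, ← diagonal_finsetSum]
    congr 1
    ext x
    simp [Finset.sum_apply]
  simp only [sum_smul_single_one_eq_diagonal]
  simp only [← diagonal_single]
  refine ⟨fun x => ⟨?_, by simp [trace_diagonal]⟩, fun y k => ?_, fun y k => ?_, fun y => ?_,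
    fun x y k => trace_diagonal_single_mul_diagonal x _, fun β β' hβ => ?_⟩
  · exact posSemidef_diagonal_iff.mpr (Pi.single_nonneg.mpr zero_le_one)
  · exact posSemidef_diagonal_ofReal fun x => hpos x y k
  · rw [← diagonal_one, diagonal_sub]
    exact_mod_cast posSemidef_diagonal_ofReal fun x => sub_nonneg.mpr (hle x y k)
  · rw [← diagonal_finsetSum, ← diagonal_one]
    congr 1
    ext x
    simp [Finset.sum_apply, ← Complex.ofReal_sum, hnorm]
  · rw [hcombination, hcombination]
    simp_rw [hβ]

/-- Classical (diagonal) quantum realisation of an arbitrary behaviour: with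
`ρ_x = E_{xx}` and `M^y_k = Σ_x p(k|x,y) E_{xx}` on `ℂ^X`, every behaviour is reproduced,
the operators form density matrices and POVMs, and any measurement operational equivalence
satisfied by the behaviour is satisfied by the operators. -/
theorem diagonal_realisation_trivial_preparation_equivalences
    (X Y K : ℕ) (hX : 1 ≤ X) (hY : 1 ≤ Y) (hK : 1 ≤ K)
    (p : Fin X × Fin Y × Fin K → ℝ)
    (hpos : ∀ x y k, 0 ≤ p (x, y, k))
    (hnorm : ∀ x y, ∑ k, p (x, y, k) = 1) :
    (∀ x : Fin X, (Matrix.single x x (1 : ℂ)).PosSemidef ∧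
      (Matrix.single x x (1 : ℂ)).trace = 1) ∧
    (∀ y k, (∑ x, (p (x, y, k) : ℂ) • Matrix.single x x (1 : ℂ)).PosSemidef) ∧
    (∀ y k, ((1 : Matrix (Fin X) (Fin X) ℂ) -
      ∑ x, (p (x, y, k) : ℂ) • Matrix.single x x (1 : ℂ)).PosSemidef) ∧
    (∀ y, ∑ k, ∑ x, (p (x, y, k) : ℂ) • Matrix.single x x (1 : ℂ) = 1) ∧
    (∀ x y k, (Matrix.single x x (1 : ℂ) *
      ∑ x', (p (x', y, k) : ℂ) • Matrix.single x' x' (1 : ℂ)).trace = (p (x, y, k) : ℂ)) ∧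
    (∀ β β' : Fin K × Fin Y → ℝ,
      (∀ x, ∑ k, ∑ y, β (k, y) * p (x, y, k) = ∑ k, ∑ y, β' (k, y) * p (x, y, k)) →
      ∑ k, ∑ y, (β (k, y) : ℂ) • ∑ x, (p (x, y, k) : ℂ) • Matrix.single x x (1 : ℂ)
        = ∑ k, ∑ y, (β' (k, y) : ℂ) • ∑ x, (p (x, y, k) : ℂ) • Matrix.single x x (1 : ℂ)) :=
  diagonal_realisation_trivial_preparation_equivalences_general X Y K p hpos hnorm
end

section
/- (Quantum realisation underlying the result that every contextuality scenario with three preparations is trivial.) Let Y, K ≥ 1, let q ∈ [0,1], and let p : Fin 3 × Fin Y × Fin K → ℝ satisfy p(k|x,y) ≥ 0, Σ_{k} p(k|x,y) = 1 for all x, y, and the preparation-equivalence constraint p(k|2,y) = q·p(k|0,y) + (1−q)·p(k|1,y) for all k, y. On ℂ² define ρ₀ = E₀₀, ρ₁ = E₁₁, ρ₂ = q·ρ₀ + (1−q)·ρ₁, and M^y_k = p(k|0,y)·E₀₀ + p(k|1,y)·E₁₁. Then: (i) ρ₀, ρ₁, ρ₂ are density matrices and ρ₂ = q·ρ₀ +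 (1−q)·ρ₁; (ii) for each y, {M^y_k}_k is a POVM (0 ≤ M^y_k ≤ I and Σ_k M^y_k = I); (iii) tr(ρ_x M^y_k) = p(k|x,y) for all x ∈ Fin 3, y, k; and (iv) any equality Σ_{k,y} β(k,y) p(k|x,y) = Σ_{k,y} β'(k,y) p(k|x,y) holding for all x ∈ Fin 3 implies the operator equality Σ_{k,y} β(k,y) M^y_k = Σ_{k,y} β'(k,y) M^y_k. -/
open Matrix ComplexOrder

/-- The three states `ρ₀ = E₀₀`, `ρ₁ = E₁₁`, `ρ₂ = q•ρ₀ + (1−q)•ρ₁` on `ℂ²`. -/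
noncomputable def rhoTriple (q : ℝ) : Fin 3 → Matrix (Fin 2) (Fin 2) ℂ :=
  ![Matrix.single 0 0 (1 : ℂ), Matrix.single 1 1 (1 : ℂ),
    (q : ℂ) • Matrix.single 0 0 (1 : ℂ) +
      ((1 - q : ℝ) : ℂ) • Matrix.single 1 1 (1 : ℂ)]

/-- The diagonal measurement operators `M^y_k = p(k|0,y)•E₀₀ + p(k|1,y)•E₁₁` on `ℂ²`. -/
noncomputable def measDiag {Y K : ℕ} (p : Fin 3 × Fin Y × Fin K → ℝ) (y : Fin Y) (k : Fin K) :
    Matrix (Fin 2) (Fin 2) ℂ :=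
  (p (0, y, k) : ℂ) • Matrix.single 0 0 (1 : ℂ) +
    (p (1, y, k) : ℂ) • Matrix.single 1 1 (1 : ℂ)

/-! All operators are diagonal in the computational basis, so the realisation is classical:
`ρ_x` is the probability vector `(w_x, 1 - w_x)` with `w = (1, 0, q)`, `M^y_k` is the response
vector `(p(k|0,y), p(k|1,y))`, and `tr(ρ_x M^y_k) = w_x p(k|0,y) + (1 - w_x) p(k|1,y)`, which is
`p(k|x,y)` by the preparation equivalence. A combination `∑ β(k,y) M^y_k` is the diagonal matrix
of its values on the preparations `0` and `1`, so every operational equivalence of the behaviour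
is an identity of operators. -/

namespace Matrix

theorem smul_single_add_smul_single_eq_diagonal {R : Type*} [Semiring R] (a b : R) :
    a • single (0 : Fin 2) (0 : Fin 2) (1 : R) + b • single 1 1 1 = diagonal ![a, b] := by
  ext i j
  fin_cases i <;> fin_cases j <;> simp [diagonal]

theorem sum_diagonal {ι n α : Type*} [DecidableEq n] [AddCommMonoid α] (s : Finset ι)
    (d : ι → n → α) : ∑ j ∈ s, diagonal (d j) = diagonal (∑ j ∈ s, d j) :=
  (map_sum (diagonalAddMonoidHom n α) d s).symm

end Matrix

def stateWeight (q : ℝ) : Fin 3 → ℝ := ![1, 0, q]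

theorem stateWeight_mem_Icc {q : ℝ} (hq0 : 0 ≤ q) (hq1 : q ≤ 1) (x : Fin 3) :
    stateWeight q x ∈ Set.Icc 0 1 := by
  fin_cases x <;> simp [stateWeight, hq0, hq1]

theorem rhoTriple_eq_diagonal (q : ℝ) (x : Fin 3) :
    rhoTriple q x = diagonal ![(stateWeight q x : ℂ), ((1 - stateWeight q x : ℝ) : ℂ)] := by
  rw [← smul_single_add_smul_single_eq_diagonal]
  fin_cases x <;> simp [rhoTriple, stateWeight]

theorem rhoTriple_posSemidef {q : ℝ} (hq0 : 0 ≤ q) (hq1 : q ≤ 1) (x : Fin 3) :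
    (rhoTriple q x).PosSemidef := by
  obtain ⟨hw0, hw1⟩ := stateWeight_mem_Icc hq0 hq1 x
  rw [rhoTriple_eq_diagonal, posSemidef_diagonal_iff, Fin.forall_fin_two]
  exact ⟨Complex.zero_le_real.mpr hw0, Complex.zero_le_real.mpr (sub_nonneg.mpr hw1)⟩

theorem trace_rhoTriple (q : ℝ) (x : Fin 3) : (rhoTriple q x).trace = 1 := by
  simp [rhoTriple_eq_diagonal]

section Behaviour

variable {Y K : ℕ} (p : Fin 3 × Fin Y × Fin K → ℝ)

theorem measDiag_eq_diagonal (y : Fin Y) (k : Fin K) :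
    measDiag p y k = diagonal fun i : Fin 2 => (p (i.castSucc, y, k) : ℂ) := by
  rw [measDiag, smul_single_add_smul_single_eq_diagonal]
  congr 1
  ext i
  fin_cases i <;> rfl

theorem measDiag_posSemidef (hpos : ∀ x y k, 0 ≤ p (x, y, k)) (y : Fin Y) (k : Fin K) :
    (measDiag p y k).PosSemidef := by
  rw [measDiag_eq_diagonal, posSemidef_diagonal_iff]
  exact fun i => Complex.zero_le_real.mpr (hpos _ y k)

theorem one_sub_measDiag_posSemidef (hpos : ∀ x y k, 0 ≤ p (x, y, k))
    (hnorm : ∀ x y, ∑ k, p (x, y, k) = 1) (y : Fin Y) (k : Fin K) :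
    (1 - measDiag p y k).PosSemidef := by
  rw [measDiag_eq_diagonal, ← diagonal_one, diagonal_sub, posSemidef_diagonal_iff]
  intro i
  have hle : p (i.castSucc, y, k) ≤ 1 :=
    hnorm i.castSucc y ▸ Finset.single_le_sum (fun k _ => hpos _ y k) (Finset.mem_univ k)
  exact_mod_cast sub_nonneg.mpr hle

theorem sum_measDiag (hnorm : ∀ x y, ∑ k, p (x, y, k) = 1) (y : Fin Y) :
    ∑ k, measDiag p y k = 1 := by
  simp_rw [measDiag_eq_diagonal, sum_diagonal, ← diagonal_one]
  congr 1
  ext i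
  simp [Finset.sum_apply, ← Complex.ofReal_sum, hnorm]

theorem behaviour_eq_stateWeight_mix {q : ℝ}
    (hequiv : ∀ y k, p (2, y, k) = q * p (0, y, k) + (1 - q) * p (1, y, k))
    (x : Fin 3) (y : Fin Y) (k : Fin K) :
    p (x, y, k) = stateWeight q x * p (0, y, k) + (1 - stateWeight q x) * p (1, y, k) := by
  fin_cases x <;> simp [stateWeight, hequiv]

theorem trace_rhoTriple_mul_measDiag {q : ℝ}
    (hequiv : ∀ y k, p (2, y, k) = q * p (0, y, k) + (1 - q) * p (1, y, k))
    (x : Fin 3) (y : Fin Y) (k : Fin K) :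
    (rhoTriple q x * measDiag p y k).trace = p (x, y, k) := by
  rw [rhoTriple_eq_diagonal, measDiag_eq_diagonal, diagonal_mul_diagonal, trace_diagonal,
    behaviour_eq_stateWeight_mix p hequiv]
  simp [Fin.sum_univ_two]

theorem sum_smul_measDiag_eq_of_forall (β β' : Fin K × Fin Y → ℝ)
    (hβ : ∀ x : Fin 3, ∑ k, ∑ y, β (k, y) * p (x, y, k) = ∑ k, ∑ y, β' (k, y) * p (x, y, k)) :
    ∑ k, ∑ y, (β (k, y) : ℂ) • measDiag p y k = ∑ k, ∑ y, (β' (k, y) : ℂ) • measDiag p y k := by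
  simp_rw [measDiag_eq_diagonal, ← diagonal_smul, sum_diagonal]
  congr 1
  ext i
  simpa [Finset.sum_apply] using congrArg ((↑) : ℝ → ℂ) (hβ i.castSucc)

end Behaviour

theorem three_preparation_scenarios_trivial_general
    (Y K : ℕ) (q : ℝ) (hq0 : 0 ≤ q) (hq1 : q ≤ 1)
    (p : Fin 3 × Fin Y × Fin K → ℝ)
    (hpos : ∀ x y k, 0 ≤ p (x, y, k))
    (hnorm : ∀ x y, ∑ k, p (x, y, k) = 1)
    (hequiv : ∀ y k, p (2, y, k) = q * p (0, y, k) + (1 - q) * p (1, y, k)) :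
    (∀ x : Fin 3, (rhoTriple q x).PosSemidef ∧ (rhoTriple q x).trace = 1) ∧
    (rhoTriple q 2 = (q : ℂ) • rhoTriple q 0 + ((1 - q : ℝ) : ℂ) • rhoTriple q 1) ∧
    (∀ y k, (measDiag p y k).PosSemidef) ∧
    (∀ y k, ((1 : Matrix (Fin 2) (Fin 2) ℂ) - measDiag p y k).PosSemidef) ∧
    (∀ y, ∑ k, measDiag p y k = 1) ∧
    (∀ x y k, (rhoTriple q x * measDiag p y k).trace = (p (x, y, k) : ℂ)) ∧
    (∀ β β' : Fin K × Fin Y → ℝ,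
      (∀ x : Fin 3, ∑ k, ∑ y, β (k, y) * p (x, y, k) = ∑ k, ∑ y, β' (k, y) * p (x, y, k)) →
      ∑ k, ∑ y, (β (k, y) : ℂ) • measDiag p y k
        = ∑ k, ∑ y, (β' (k, y) : ℂ) • measDiag p y k) :=
  ⟨fun x => ⟨rhoTriple_posSemidef hq0 hq1 x, trace_rhoTriple q x⟩, rfl,
    measDiag_posSemidef p hpos, one_sub_measDiag_posSemidef p hpos hnorm, sum_measDiag p hnorm,
    trace_rhoTriple_mul_measDiag p hequiv, sum_smul_measDiag_eq_of_forall p⟩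

/-- Quantum realisation on `ℂ²` of any behaviour on three preparations satisfying the
preparation equivalence `P₂ ≃ q P₀ + (1−q) P₁`: the states `ρ₀ = E₀₀`, `ρ₁ = E₁₁`,
`ρ₂ = q•ρ₀ + (1−q)•ρ₁` and diagonal POVMs `M^y_k = p(k|0,y)•E₀₀ + p(k|1,y)•E₁₁` reproduce
the behaviour, satisfy the state equivalence exactly, and inherit every measurement
operational equivalence holding at the level of the behaviour. -/
theorem three_preparation_scenarios_trivial
    (Y K : ℕ) (hY : 1 ≤ Y) (hK : 1 ≤ K) (q : ℝ) (hq0 : 0 ≤ q) (hq1 : q ≤ 1)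
    (p : Fin 3 × Fin Y × Fin K → ℝ)
    (hpos : ∀ x y k, 0 ≤ p (x, y, k))
    (hnorm : ∀ x y, ∑ k, p (x, y, k) = 1)
    (hequiv : ∀ y k, p (2, y, k) = q * p (0, y, k) + (1 - q) * p (1, y, k)) :
    (∀ x : Fin 3, (rhoTriple q x).PosSemidef ∧ (rhoTriple q x).trace = 1) ∧
    (rhoTriple q 2 = (q : ℂ) • rhoTriple q 0 + ((1 - q : ℝ) : ℂ) • rhoTriple q 1) ∧
    (∀ y k, (measDiag p y k).PosSemidef) ∧
    (∀ y k, ((1 : Matrix (Fin 2) (Fin 2) ℂ) - measDiag p y k).PosSemidef) ∧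
    (∀ y, ∑ k, measDiag p y k = 1) ∧
    (∀ x y k, (rhoTriple q x * measDiag p y k).trace = (p (x, y, k) : ℂ)) ∧
    (∀ β β' : Fin K × Fin Y → ℝ,
      (∀ x : Fin 3, ∑ k, ∑ y, β (k, y) * p (x, y, k) = ∑ k, ∑ y, β' (k, y) * p (x, y, k)) →
      ∑ k, ∑ y, (β (k, y) : ℂ) • measDiag p y k
        = ∑ k, ∑ y, (β' (k, y) : ℂ) • measDiag p y k) :=
  three_preparation_scenarios_trivial_general Y K q hq0 hq1 p hpos hnorm hequiv
end

section
/- For every d ≥ 1 there do not exist two three-outcome projective measurements {M⁰_k}_{k ∈ Fin 3} and {M¹_k}_{k ∈ Fin 3} on ℂ^d — i.e. families of Hermitian idempotent d×d complex matrices with Σ_{k ∈ Fin 3} M⁰_k = I_d and Σ_{k ∈ Fin 3} M¹_k = I_d — satisfying the operational-equivalence constraints (1/2)(M⁰_k + M¹_k) = (1/3)·I_d for every k ∈ Fin 3. -/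
/-- No pair of three-outcome projective measurements `{M⁰_k}`, `{M¹_k}` on `ℂ^d` can satisfy
the (2,3)-mporac measurement equivalences `(1/2)(M⁰_k + M¹_k) = (1/3) • I` for all `k`. -/
theorem no_projective_measurements_in_23_mporac (d : ℕ) (hd : 1 ≤ d) :
    ¬ ∃ M₀ M₁ : Fin 3 → Matrix (Fin d) (Fin d) ℂ,
      (∀ k, (M₀ k).IsHermitian ∧ M₀ k * M₀ k = M₀ k) ∧
      (∀ k, (M₁ k).IsHermitian ∧ M₁ k * M₁ k = M₁ k) ∧
      (∑ k, M₀ k = 1) ∧ (∑ k, M₁ k = 1) ∧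
      (∀ k, (1 / 2 : ℂ) • (M₀ k + M₁ k) = (1 / 3 : ℂ) • (1 : Matrix (Fin d) (Fin d) ℂ)) := by
  rintro ⟨M₀, M₁, h0, h1, -, -, heq⟩
  set P := M₀ 0 with hPdef
  set Q := M₁ 0 with hQdef
  have hPQ : P + Q = (2/3 : ℂ) • 1 := by
    have h2 := congrArg (fun X => (2:ℂ) • X) (heq 0)
    simp only [smul_smul] at h2
    norm_num at h2
    convert h2 using 2 <;> norm_num
  have hQ : Q = (2/3:ℂ) • 1 - P := by rw [← hPQ]; abel
  have hQQ := (h1 0).2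
  rw [← hQdef, hQ] at hQQ
  have hPP := (h0 0).2
  rw [← hPdef] at hPP
  have hexp : ((2/3:ℂ)•1 - P) * ((2/3:ℂ)•1 - P)
      = (4/9:ℂ)•(1:Matrix (Fin d) (Fin d) ℂ) - (4/3:ℂ)•P + P := by
    simp only [sub_mul, mul_sub, smul_mul_assoc, mul_smul_comm, smul_smul,
      one_mul, mul_one, hPP]
    module
  rw [hexp] at hQQ
  have hP : P = (1/3:ℂ) • 1 := by
    have h3 : (2/3:ℂ) • P = (2/9:ℂ) • (1:Matrix (Fin d) (Fin d) ℂ) := by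
      have := sub_eq_zero.mpr hQQ
      rw [show (4/9:ℂ)•(1:Matrix (Fin d) (Fin d) ℂ) - (4/3:ℂ)•P + P - ((2/3:ℂ)•1 - P)
          = (2/3:ℂ)•P - (2/9:ℂ)•1 from by module] at this
      rw [← sub_eq_zero]
      exact this
    have h4 := congrArg (fun X => (3/2:ℂ) • X) h3
    simpa [smul_smul, show (3/2:ℂ)*(2/3)=1 by norm_num,
      show (3/2:ℂ)*(2/9)=1/3 by norm_num] using h4
  rw [hP] at hPP
  have i : Fin d := ⟨0, hd⟩
  have := congrFun (congrFun hPP i) i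
  simp [Matrix.mul_apply, Matrix.one_apply, Matrix.smul_apply, Finset.sum_ite_eq] at this
end

section
/- (Unitary parametrisation of measurement effects.) Let M be a d×d complex matrix with 0 ≤ M ≤ I, i.e. both M and I − M are positive semidefinite. Then there exists a unitary d×d complex matrix U such that M = (1/2)·I + (1/4)·(U + U†). -/
open Matrix ComplexOrder

/-- Unitary parametrisation of measurement effects: any operator `0 ≤ M ≤ I` on `ℂ^d` can be
written as `M = (1/2)•I + (1/4)•(U + U†)` for some unitary `U`. -/
theorem effect_unitary_parametrisation (d : ℕ) (M : Matrix (Fin d) (Fin d) ℂ)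
    (hM : M.PosSemidef) (hM' : ((1 : Matrix (Fin d) (Fin d) ℂ) - M).PosSemidef) :
    ∃ U : Matrix (Fin d) (Fin d) ℂ, U * Uᴴ = 1 ∧ Uᴴ * U = 1 ∧
      M = (1 / 2 : ℂ) • (1 : Matrix (Fin d) (Fin d) ℂ) + (1 / 4 : ℂ) • (U + Uᴴ) := by
  classical
  have hH : M.IsHermitian := hM.1
  set lam := hH.eigenvalues with hlam
  set V : Matrix (Fin d) (Fin d) ℂ := (hH.eigenvectorUnitary : Matrix (Fin d) (Fin d) ℂ) with hV
  have hVmem := hH.eigenvectorUnitary.2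
  have hVV : V * Vᴴ = 1 := by
    have := (Matrix.mem_unitaryGroup_iff).mp hVmem
    simpa [Matrix.star_eq_conjTranspose] using this
  have hVV' : Vᴴ * V = 1 := by
    have := (Matrix.mem_unitaryGroup_iff').mp hVmem
    simpa [Matrix.star_eq_conjTranspose] using this
  have hdiag : Vᴴ * M * V = diagonal (RCLike.ofReal ∘ lam) := by
    have := hH.conjStarAlgAut_star_eigenvectorUnitary
    rw [Unitary.conjStarAlgAut_star_apply] at this
    simpa [Matrix.star_eq_conjTranspose] using this
  -- eigenvalue bounds
  have h0 : ∀ i, 0 ≤ lam i := hM.eigenvalues_nonneg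
  have h1 : ∀ i, lam i ≤ 1 := by
    intro i
    have hps := hM'.conjTranspose_mul_mul_same V
    have heq : Vᴴ * (1 - M) * V = diagonal (fun i => 1 - ((lam i : ℝ) : ℂ)) := by
      rw [Matrix.mul_sub, Matrix.mul_one, Matrix.sub_mul, hVV', hdiag]
      rw [← Matrix.diagonal_one, Matrix.diagonal_sub]
      rfl
    rw [heq] at hps
    have := (Matrix.posSemidef_diagonal_iff.mp hps) i
    have h' : (0 : ℝ) ≤ 1 - lam i := by exact_mod_cast this
    linarith
  -- the unimodular diagonal entries
  set u : Fin d → ℂ :=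
    fun i => ((2 * lam i - 1 : ℝ) : ℂ) + ((2 * Real.sqrt (lam i * (1 - lam i)) : ℝ) : ℂ) * Complex.I
    with hu
  have hmulconj : ∀ i, u i * star (u i) = 1 := by
    intro i
    have hsq : (2 * Real.sqrt (lam i * (1 - lam i)))^2 = 4 * (lam i * (1 - lam i)) := by
      have hnn : 0 ≤ lam i * (1 - lam i) := mul_nonneg (h0 i) (by linarith [h1 i])
      rw [mul_pow, Real.sq_sqrt hnn]; ring
    have h2 : u i * star (u i) = ((Complex.normSq (u i) : ℝ) : ℂ) := by
      rw [← Complex.mul_conj]; rfl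
    rw [h2]
    have hns : Complex.normSq (u i) =
        (2 * lam i - 1)^2 + (2 * Real.sqrt (lam i * (1 - lam i)))^2 := by
      simp [hu, Complex.normSq_apply]; ring
    rw [hns, hsq]
    norm_cast
    ring
  have haddconj : ∀ i, u i + star (u i) = ((2 * (2 * lam i - 1) : ℝ) : ℂ) := by
    intro i
    have h3 : star (u i) = (starRingEnd ℂ) (u i) := rfl
    rw [h3, Complex.add_conj]
    simp [hu]
    try push_cast
    try ring
  have hsmul : ∀ (a : ℂ) (D : Matrix (Fin d) (Fin d) ℂ),
      a • (V * D * Vᴴ) = V * (a • D) * Vᴴ := by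
    intro a D
    rw [Matrix.mul_smul, Matrix.smul_mul]
  refine ⟨V * diagonal u * Vᴴ, ?_, ?_, ?_⟩
  · have hT : (V * diagonal u * Vᴴ)ᴴ = V * diagonal (fun i => star (u i)) * Vᴴ := by
      simp only [Matrix.conjTranspose_mul, Matrix.diagonal_conjTranspose,
        Matrix.conjTranspose_conjTranspose, Matrix.mul_assoc]
      rfl
    rw [hT]
    calc V * diagonal u * Vᴴ * (V * diagonal (fun i => star (u i)) * Vᴴ)
        = V * (diagonal u * (Vᴴ * V) * diagonal (fun i => star (u i))) * Vᴴ := by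
          simp only [Matrix.mul_assoc]
      _ = V * (diagonal u * diagonal (fun i => star (u i))) * Vᴴ := by rw [hVV', Matrix.mul_one]
      _ = V * diagonal (fun i => u i * star (u i)) * Vᴴ := by
          rw [Matrix.diagonal_mul_diagonal]
      _ = 1 := by
          have h4 : (fun i => u i * star (u i)) = fun _ => (1:ℂ) := funext hmulconj
          rw [h4, Matrix.diagonal_one, Matrix.mul_one, hVV]
  · have hT : (V * diagonal u * Vᴴ)ᴴ = V * diagonal (fun i => star (u i)) * Vᴴ := by
      simp only [Matrix.conjTranspose_mul, Matrix.diagonal_conjTranspose,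
        Matrix.conjTranspose_conjTranspose, Matrix.mul_assoc]
      rfl
    rw [hT]
    calc V * diagonal (fun i => star (u i)) * Vᴴ * (V * diagonal u * Vᴴ)
        = V * (diagonal (fun i => star (u i)) * (Vᴴ * V) * diagonal u) * Vᴴ := by
          simp only [Matrix.mul_assoc]
      _ = V * (diagonal (fun i => star (u i)) * diagonal u) * Vᴴ := by rw [hVV', Matrix.mul_one]
      _ = V * diagonal (fun i => star (u i) * u i) * Vᴴ := by
          rw [Matrix.diagonal_mul_diagonal]
      _ = 1 := by
          have h4 : (fun i => star (u i) * u i) = fun _ => (1:ℂ) := by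
            funext i; rw [mul_comm]; exact hmulconj i
          rw [h4, Matrix.diagonal_one, Matrix.mul_one, hVV]
  · have hT : (V * diagonal u * Vᴴ)ᴴ = V * diagonal (fun i => star (u i)) * Vᴴ := by
      simp only [Matrix.conjTranspose_mul, Matrix.diagonal_conjTranspose,
        Matrix.conjTranspose_conjTranspose, Matrix.mul_assoc]
      rfl
    rw [hT]
    have hsum : V * diagonal u * Vᴴ + V * diagonal (fun i => star (u i)) * Vᴴ
        = V * diagonal (fun i => ((2 * (2 * lam i - 1) : ℝ) : ℂ)) * Vᴴ := by
      rw [← Matrix.add_mul, ← Matrix.mul_add, Matrix.diagonal_add]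
      have h5 : (fun i => u i + star (u i)) = (fun i => ((2 * (2 * lam i - 1) : ℝ) : ℂ)) :=
        funext haddconj
      rw [h5]
    rw [hsum]
    have hkey : diagonal (RCLike.ofReal ∘ lam) =
        (1 / 2 : ℂ) • (1 : Matrix (Fin d) (Fin d) ℂ)
          + (1 / 4 : ℂ) • diagonal (fun i => ((2 * (2 * lam i - 1) : ℝ) : ℂ)) := by
      ext i j
      rcases eq_or_ne i j with h | h
      · subst h
        simp only [Matrix.diagonal_apply_eq, Matrix.add_apply, Matrix.smul_apply,
          Matrix.one_apply_eq, smul_eq_mul, Function.comp_apply, mul_one]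
        push_cast
        ring_nf
        norm_cast
      · simp [Matrix.diagonal_apply_ne _ h, Matrix.one_apply_ne h]
    calc M = V * diagonal (RCLike.ofReal ∘ lam) * Vᴴ := hH.spectral_theorem
      _ = V * ((1 / 2 : ℂ) • (1 : Matrix (Fin d) (Fin d) ℂ)
            + (1 / 4 : ℂ) • diagonal (fun i => ((2 * (2 * lam i - 1) : ℝ) : ℂ))) * Vᴴ := by
          rw [hkey]
      _ = (1 / 2 : ℂ) • (V * 1 * Vᴴ)
            + (1 / 4 : ℂ) • (V * diagonal (fun i => ((2 * (2 * lam i - 1) : ℝ) : ℂ)) * Vᴴ) := by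
          rw [Matrix.mul_add, Matrix.add_mul, hsmul, hsmul]
      _ = (1 / 2 : ℂ) • (1 : Matrix (Fin d) (Fin d) ℂ)
            + (1 / 4 : ℂ) • (V * diagonal (fun i => ((2 * (2 * lam i - 1) : ℝ) : ℂ)) * Vᴴ) := by
          rw [Matrix.mul_one, hVV]
end

section
/- (Explicit noncontextual model attaining S = (1/2)(1 + 1/n) for the (n,2)-mporac, showing the measurement equivalences do not lower the noncontextual bound.) Fix n ≥ 2. Define, on the binary ontic state space λ ∈ {0,1}: epistemic states μ(λ|x) = 1 if λ = x₀ and 0 otherwise, for x ∈ {0,1}^n; and response functions ξ(k|y,λ) for y ∈ Fin n, k ∈ {0,1} by ξ(k|0,λ) = 1 if k = λ and 0 otherwise, while for y ≠ 0, ξ(λ|y,λ) = (n−2)/(2(n−1)) and ξ(1−λ|y,λ) = n/(2(n−1)). Let p(k|x,y) = Σ_{λ ∈ {0,1}} μ(λ|x) ξ(k|y,λ). Then: (i) for all x, y, p(·|x,y) is a probability distribution on {0,1}; (ii) the (n,2)-porac success metric satisfies (1/(n·2^n)) Σ_{x ∈ {0,1}^n} Σ_{y ∈ Fin n} p(x_y|x,y)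 = (n+1)/(2n); (iii) the response functions satisfy the measurement operational equivalence (1/n) Σ_{y ∈ Fin n} ξ(0|y,λ) = (1/n) Σ_{y ∈ Fin n} ξ(1|y,λ) for each λ ∈ {0,1}; and (iv) the epistemic states are parity oblivious: for every subset T ⊆ Fin n with |T| ≥ 2 and each λ ∈ {0,1}, Σ_{x : ⊕_{i∈T} x_i = 0} μ(λ|x) = Σ_{x : ⊕_{i∈T} x_i = 1} μ(λ|x). -/
open Finset

/-- Epistemic states of the noncontextual model for the (n,2)-mporac: `μ(λ|x) = 1` iff
`λ = x₀`, the first bit of Alice's input string `x ∈ {0,1}ⁿ`. -/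
noncomputable def epistemic (n : ℕ) [NeZero n] (lam : Fin 2) (x : Fin n → Fin 2) : ℝ :=
  if lam = x 0 then 1 else 0

/-- Response functions of the noncontextual model for the (n,2)-mporac:
`ξ(k|0,λ) = δ_{k,λ}`, and for `y ≠ 0`, `ξ(λ|y,λ) = (n−2)/(2(n−1))` and
`ξ(1−λ|y,λ) = n/(2(n−1))`. -/
noncomputable def response (n : ℕ) [NeZero n] (k : Fin 2) (y : Fin n) (lam : Fin 2) : ℝ :=
  if y = 0 then (if k = lam then 1 else 0)
  else if k = lam then ((n : ℝ) - 2) / (2 * ((n : ℝ) - 1))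
  else (n : ℝ) / (2 * ((n : ℝ) - 1))

/-- The behaviour `p(k|x,y) = Σ_λ μ(λ|x) ξ(k|y,λ)` of the noncontextual model. -/
noncomputable def ncBehaviour (n : ℕ) [NeZero n] (k : Fin 2) (x : Fin n → Fin 2) (y : Fin n) :
    ℝ :=
  ∑ lam : Fin 2, epistemic n lam x * response n k y lam

/-!
Since `μ(·|x)` is the point mass at the first bit `x₀`, the behaviour is `p(k|x,y) = ξ(k|y,x₀)`.
Every epistemic state is invariant under flipping a bit `j ≠ 0`, and any `T` with `|T| ≥ 2`
contains such a `j`; flipping it is a bijection between the even and odd strings on `T`, which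
gives parity obliviousness. For `y ≠ 0` the same flip pairs `x` with a string on which Bob's
guess is correct with the complementary probability, so Bob succeeds on exactly half of the
strings, while for `y = 0` he always succeeds: `S = (2ⁿ + (n-1) 2ⁿ/2) / (n 2ⁿ) = (n+1)/(2n)`.
Finally `Σ_y ξ(k|y,λ) = n/2` for both outcomes `k`.
-/

lemma Equiv.Perm.two_nsmul_sum_eq_card_nsmul {α M : Type*} [Fintype α] [AddCommMonoid M]
    (σ : Equiv.Perm α) {f : α → M} {c : M} (h : ∀ x, f x + f (σ x) = c) :
    2 • ∑ x, f x = Fintype.card α • c := by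
  rw [two_nsmul]
  nth_rewrite 2 [← Equiv.sum_comp σ f]
  rw [← sum_add_distrib, sum_congr rfl fun x _ => h x, sum_const, card_univ]

section FlipBit

variable {ι : Type*} [DecidableEq ι]

def flipBit (j : ι) (x : ι → Fin 2) : ι → Fin 2 :=
  Function.update x j (x j + 1)

lemma flipBit_apply_self (j : ι) (x : ι → Fin 2) : flipBit j x j = x j + 1 :=
  Function.update_self _ _ _

lemma flipBit_apply_of_ne {j i : ι} (h : i ≠ j) (x : ι → Fin 2) : flipBit j x i = x i :=
  Function.update_of_ne h _ _

lemma flipBit_involutive (j : ι) : Function.Involutive (flipBit j) := by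
  intro x
  have h : (1 + 1 : Fin 2) = 0 := rfl
  rw [flipBit, flipBit, Function.update_self, Function.update_idem, add_assoc, h, add_zero,
    Function.update_eq_self]

lemma flipBit_parity {j : ι} {T : Finset ι} (hj : j ∈ T) (x : ι → Fin 2) :
    (∑ i ∈ T, (flipBit j x i : ℕ)) % 2 = 1 - (∑ i ∈ T, (x i : ℕ)) % 2 := by
  rw [← sum_erase_add T _ hj, ← sum_erase_add T (fun i => (x i : ℕ)) hj,
    sum_congr rfl fun i hi => by rw [flipBit_apply_of_ne (ne_of_mem_erase hi)],
    flipBit_apply_self]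
  have hflip : ((x j + 1 : Fin 2) : ℕ) = 1 - (x j : ℕ) := by
    generalize x j = a
    fin_cases a <;> rfl
  have hbit : (x j : ℕ) ≤ 1 := Nat.le_of_lt_succ (x j).isLt
  omega

lemma sum_even_parity_eq_sum_odd_parity [Fintype ι] {M : Type*} [AddCommMonoid M]
    {T : Finset ι} {j : ι} (hj : j ∈ T) {f : (ι → Fin 2) → M}
    (hf : ∀ x, f (flipBit j x) = f x) :
    ∑ x ∈ univ.filter (fun x : ι → Fin 2 => (∑ i ∈ T, (x i : ℕ)) % 2 = 0), f x
      = ∑ x ∈ univ.filter (fun x : ι → Fin 2 => (∑ i ∈ T, (x i : ℕ)) % 2 = 1), f x := by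
  refine sum_nbij' (flipBit j) (flipBit j) ?_ ?_
    (fun x _ => flipBit_involutive j x) (fun x _ => flipBit_involutive j x)
    (fun x _ => (hf x).symm) <;>
  · intro x hx
    simp only [mem_filter, mem_univ, true_and] at hx ⊢
    rw [flipBit_parity hj, hx]

end FlipBit

section Model

variable {n : ℕ} [NeZero n]

lemma two_le_of_ne_zero {y : Fin n} (hy : y ≠ 0) : 2 ≤ n := by
  have := Fin.val_ne_zero_iff.mpr hy
  omega

lemma ncBehaviour_eq_response (k : Fin 2) (x : Fin n → Fin 2) (y : Fin n) :
    ncBehaviour n k x y = response n k y (x 0) := by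
  simp only [ncBehaviour, epistemic, ite_mul, one_mul, zero_mul, sum_ite_eq', mem_univ,
    if_true]

lemma epistemic_flipBit {j : Fin n} (hj : j ≠ 0) (lam : Fin 2) (x : Fin n → Fin 2) :
    epistemic n lam (flipBit j x) = epistemic n lam x := by
  rw [epistemic, epistemic, flipBit_apply_of_ne hj.symm]

lemma response_zero (k lam : Fin 2) : response n k 0 lam = if k = lam then 1 else 0 :=
  if_pos rfl

lemma response_of_ne_zero {y : Fin n} (hy : y ≠ 0) (k lam : Fin 2) :
    response n k y lam = if k = lam then ((n : ℝ) - 2) / (2 * ((n : ℝ) - 1))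
      else (n : ℝ) / (2 * ((n : ℝ) - 1)) :=
  if_neg hy

lemma response_nonneg (k : Fin 2) (y : Fin n) (lam : Fin 2) : 0 ≤ response n k y lam := by
  by_cases hy : y = 0
  · subst hy
    rw [response_zero]
    split_ifs <;> norm_num
  · have hn : (2 : ℝ) ≤ n := by exact_mod_cast two_le_of_ne_zero hy
    rw [response_of_ne_zero hy]
    split_ifs <;> exact div_nonneg (by linarith) (by linarith)

lemma response_add_response_add_one (k : Fin 2) (y : Fin n) (lam : Fin 2) :
    response n k y lam + response n (k + 1) y lam = 1 := by
  have hcases : k = lam ∧ k + 1 ≠ lam ∨ k ≠ lam ∧ k + 1 = lam := by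
    fin_cases k <;> fin_cases lam <;> decide
  by_cases hy : y = 0
  · subst hy
    rw [response_zero, response_zero]
    rcases hcases with ⟨h, h'⟩ | ⟨h, h'⟩ <;> simp [h, h']
  · have hn : (2 : ℝ) ≤ n := by exact_mod_cast two_le_of_ne_zero hy
    have hn1 : (n : ℝ) - 1 ≠ 0 := by linarith
    rw [response_of_ne_zero hy, response_of_ne_zero hy]
    rcases hcases with ⟨h, h'⟩ | ⟨h, h'⟩
    · rw [if_pos h, if_neg h']
      field_simp
      ring
    · rw [if_neg h, if_pos h']
      field_simp
      ring

lemma sum_response (hn : 2 ≤ n) (k lam : Fin 2) : ∑ y : Fin n, response n k y lam = n / 2 := by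
  have hn1 : (n : ℝ) - 1 ≠ 0 := by
    have : (2 : ℝ) ≤ n := by exact_mod_cast hn
    linarith
  rw [← sum_erase_add univ _ (mem_univ 0),
    sum_congr rfl fun y hy => response_of_ne_zero (ne_of_mem_erase hy) k lam, sum_const,
    card_erase_of_mem (mem_univ _), card_univ, Fintype.card_fin, nsmul_eq_mul,
    Nat.cast_pred (Nat.pos_of_neZero n), response_zero]
  split_ifs <;> field_simp <;> ring

lemma sum_response_eval_zero :
    ∑ x : Fin n → Fin 2, response n (x 0) 0 (x 0) = 2 ^ n := by
  simp [response_zero]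

lemma sum_response_eval_of_ne_zero {y : Fin n} (hy : y ≠ 0) :
    ∑ x : Fin n → Fin 2, response n (x y) y (x 0) = 2 ^ n / 2 := by
  have hpair : ∀ x : Fin n → Fin 2, response n (x y) y (x 0)
      + response n (flipBit y x y) y (flipBit y x 0) = 1 := fun x => by
    rw [flipBit_apply_self, flipBit_apply_of_ne hy.symm, response_add_response_add_one]
  have := (flipBit_involutive y).toPerm.two_nsmul_sum_eq_card_nsmul hpair
  simp only [nsmul_eq_mul, Fintype.card_pi, Fintype.card_fin, prod_const, card_univ] at this
  push_cast at this
  linarith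

lemma sum_ncBehaviour_correct :
    ∑ x : Fin n → Fin 2, ∑ y : Fin n, ncBehaviour n (x y) x y = ((n : ℝ) + 1) * 2 ^ n / 2 := by
  simp only [ncBehaviour_eq_response]
  rw [sum_comm, ← sum_erase_add univ _ (mem_univ 0), sum_response_eval_zero,
    sum_congr rfl fun y hy => sum_response_eval_of_ne_zero (ne_of_mem_erase hy), sum_const,
    card_erase_of_mem (mem_univ _), card_univ, Fintype.card_fin, nsmul_eq_mul,
    Nat.cast_pred (Nat.pos_of_neZero n)]
  ring

end Model

/-- The explicit noncontextual ontological model on a binary ontic state space attains the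
value `S = (n+1)/(2n) = (1/2)(1 + 1/n)` for the (n,2)-mporac: it is normalised, achieves the
porac success metric value `(n+1)/(2n)`, satisfies the measurement operational equivalence
`(1/n) Σ_y ξ(0|y,·) = (1/n) Σ_y ξ(1|y,·)`, and its epistemic states are parity oblivious on
every subset of at least two bit positions. -/
theorem noncontextual_model_mporac (n : ℕ) [NeZero n] (hn : 2 ≤ n) :
    (∀ (x : Fin n → Fin 2) (y : Fin n),
      (∀ k, 0 ≤ ncBehaviour n k x y) ∧ ∑ k : Fin 2, ncBehaviour n k x y = 1) ∧
    ((1 / ((n : ℝ) * 2 ^ n)) * ∑ x : Fin n → Fin 2, ∑ y : Fin n, ncBehaviour n (x y) x y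
      = ((n : ℝ) + 1) / (2 * n)) ∧
    (∀ lam : Fin 2, (1 / (n : ℝ)) * ∑ y : Fin n, response n 0 y lam
      = (1 / (n : ℝ)) * ∑ y : Fin n, response n 1 y lam) ∧
    (∀ T : Finset (Fin n), 2 ≤ T.card → ∀ lam : Fin 2,
      ∑ x ∈ univ.filter (fun x : Fin n → Fin 2 => (∑ i ∈ T, (x i : ℕ)) % 2 = 0),
        epistemic n lam x
      = ∑ x ∈ univ.filter (fun x : Fin n → Fin 2 => (∑ i ∈ T, (x i : ℕ)) % 2 = 1),
        epistemic n lam x) := by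
  refine ⟨fun x y => ⟨fun k => ?_, ?_⟩, ?_, fun lam => ?_, fun T hT lam => ?_⟩
  · rw [ncBehaviour_eq_response]
    exact response_nonneg k y (x 0)
  · rw [Fin.sum_univ_two, ncBehaviour_eq_response, ncBehaviour_eq_response]
    exact response_add_response_add_one 0 y (x 0)
  · rw [sum_ncBehaviour_correct]
    field_simp
  · rw [sum_response hn, sum_response hn]
  · obtain ⟨j, hjT, hj0⟩ := T.exists_mem_ne hT 0
    exact sum_even_parity_eq_sum_odd_parity hjT (epistemic_flipBit hj0 lam)
end
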